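/- arXiv:1811.00866 — 2 statements merged into one kernel-verified Lean document; each statement's English description precedes it below -/
import Mathlib

section
/- Let l < u ≤ 0 and d ∈ [l, u]. Then for every y ∈ [l, u]: (i) tanh(y) ≤ tanh(l) + ((tanh(u) − tanh(l))/(u − l))(y − l) (the chord through the endpoints is an upper bound), and (ii) tanh(y) ≥ tanh(d) + (1 − tanh(d)²)(y − d) (the tangent line at d is a lower bound). -/
/-!
On `(-∞, 0]` we have `tanh ≤ 0` and `tanh² < 1`, so `tanh'' = -2 tanh (1 - tanh²) ≥ 0` and `tanh`
is convex there. A convex function lies below each of its chords and above each of its tangents.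
-/

open Set

namespace Real

theorem hasDerivAt_tanh (x : ℝ) : HasDerivAt tanh (1 - tanh x ^ 2) x := by
  have h : HasDerivAt (fun y ↦ sinh y / cosh y) _ x :=
    (hasDerivAt_sinh x).div (hasDerivAt_cosh x) (cosh_pos x).ne'
  rw [← funext tanh_eq_sinh_div_cosh] at h
  convert h using 1
  rw [tanh_eq_sinh_div_cosh]
  field_simp

theorem tanh_nonpos {x : ℝ} (hx : x ≤ 0) : tanh x ≤ 0 := by
  rw [tanh_eq_sinh_div_cosh]
  exact div_nonpos_of_nonpos_of_nonneg (sinh_nonpos_iff.2 hx) (cosh_pos x).le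

theorem convexOn_tanh_Iic : ConvexOn ℝ (Iic 0) tanh := by
  have hderiv2 (x : ℝ) :
      HasDerivAt (fun y ↦ 1 - tanh y ^ 2) (-(2 * tanh x * (1 - tanh x ^ 2))) x := by
    simpa using ((hasDerivAt_tanh x).pow 2).const_sub 1
  refine convexOn_of_hasDerivWithinAt2_nonneg (convex_Iic 0)
    (fun x _ ↦ (hasDerivAt_tanh x).continuousAt.continuousWithinAt)
    (fun x _ ↦ (hasDerivAt_tanh x).hasDerivWithinAt) (fun x _ ↦ (hderiv2 x).hasDerivWithinAt)
    (fun x hx ↦ ?_)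
  rw [interior_Iic] at hx
  nlinarith [tanh_nonpos hx.le, tanh_sq_lt_one x]

end Real

theorem ConvexOn.le_chord {𝕜 : Type*} [Field 𝕜] [LinearOrder 𝕜] [IsStrictOrderedRing 𝕜]
    {s : Set 𝕜} {f : 𝕜 → 𝕜} (hf : ConvexOn 𝕜 s f) {a b x : 𝕜} (ha : a ∈ s) (hb : b ∈ s)
    (hx : x ∈ Icc a b) : f x ≤ f a + (f b - f a) / (b - a) * (x - a) := by
  rcases hx.1.eq_or_lt with rfl | hax
  · simp
  have hab : a < b := hax.trans_le hx.2
  have hslope := hf.secant_mono ha (hf.1.ordConnected.out ha hb hx) hb hax.ne' hab.ne' hx.2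
  rw [div_le_div_iff₀ (sub_pos.2 hax) (sub_pos.2 hab)] at hslope
  rw [div_mul_eq_mul_div, ← sub_le_iff_le_add', le_div_iff₀ (sub_pos.2 hab)]
  linarith

theorem ConvexOn.add_mul_sub_le_of_hasDerivAt {s : Set ℝ} {f : ℝ → ℝ} {f' x y : ℝ}
    (hf : ConvexOn ℝ s f) (hx : x ∈ s) (hy : y ∈ s) (hf' : HasDerivAt f f' x) :
    f x + f' * (y - x) ≤ f y := by
  rcases lt_trichotomy y x with hyx | rfl | hxy
  · have hslope := hf.slope_le_of_hasDerivAt hy hx hyx hf'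
    rw [slope_def_field, div_le_iff₀ (sub_pos.2 hyx)] at hslope
    linarith
  · simp
  · have hslope := hf.le_slope_of_hasDerivAt hx hy hxy hf'
    rw [slope_def_field, le_div_iff₀ (sub_pos.2 hxy)] at hslope
    linarith

theorem tanh_crown_bounds_nonpos_general (l u d : ℝ) (hu : u ≤ 0)
    (hd : d ∈ Set.Icc l u) :
    ∀ y ∈ Set.Icc l u,
      Real.tanh y ≤ Real.tanh l + ((Real.tanh u - Real.tanh l) / (u - l)) * (y - l) ∧
      Real.tanh d + (1 - Real.tanh d ^ 2) * (y - d) ≤ Real.tanh y := by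
  intro y hy
  have hlu : l ≤ u := hy.1.trans hy.2
  have hconv : ConvexOn ℝ (Icc l u) Real.tanh :=
    Real.convexOn_tanh_Iic.subset (fun x hx ↦ hx.2.trans hu) (convex_Icc l u)
  exact ⟨hconv.le_chord (left_mem_Icc.2 hlu) (right_mem_Icc.2 hlu) hy,
    hconv.add_mul_sub_le_of_hasDerivAt hd hy (Real.hasDerivAt_tanh d)⟩

/-- CROWN linear bounds for a tanh neuron whose pre-activation interval `[l, u]` lies in
`(-∞, 0]`: the chord through the endpoints is an upper bound and the tangent line at any
`d ∈ [l, u]` is a lower bound. -/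
theorem tanh_crown_bounds_nonpos (l u d : ℝ) (hu : u ≤ 0) (hlu : l < u)
    (hd : d ∈ Set.Icc l u) :
    ∀ y ∈ Set.Icc l u,
      Real.tanh y ≤ Real.tanh l + ((Real.tanh u - Real.tanh l) / (u - l)) * (y - l) ∧
      Real.tanh d + (1 - Real.tanh d ^ 2) * (y - d) ≤ Real.tanh y :=
  tanh_crown_bounds_nonpos_general l u d hu hd
end

section
/- Let σ(y) = 1/(1 + e^{−y}), let l < 0 < u and suppose d ∈ [0, u] satisfies the tangency condition σ(d) − σ(l) = σ(d)(1 − σ(d))(d − l). Then for every y ∈ [l, u], σ(y) ≤ σ(l) + σ(d)(1 − σ(d))(y − l); that is, the line through the left endpoint (l, σ(l)) with slope σ'(d) is an upper bound for σ on [l, u]. -/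
/-!
For `y ≥ 0` the bound is the tangent line at `d` of `σ`, which is concave on `[0, ∞)`; the
tangency condition says this tangent passes through `(l, σ l)`. On `[l, 0]` the function `σ` is
convex and lies below the line at both endpoints, hence on the whole segment.
-/

/-- The sigmoid (logistic) function `σ(y) = 1 / (1 + exp (-y))`. -/
noncomputable def sigmoid (y : ℝ) : ℝ := 1 / (1 + Real.exp (-y))

open Set

lemma ConcaveOn.le_tangent_of_hasDerivAt {S : Set ℝ} {f : ℝ → ℝ} {f' x y : ℝ}
    (hf : ConcaveOn ℝ S f) (hx : x ∈ S) (hy : y ∈ S) (hf' : HasDerivAt f f' x) :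
    f y ≤ f x + f' * (y - x) := by
  rcases lt_trichotomy x y with hxy | rfl | hyx
  · have hslope := hf.slope_le_of_hasDerivAt hx hy hxy hf'
    rw [slope_def_field, div_le_iff₀ (sub_pos.2 hxy)] at hslope
    linarith
  · simp
  · have hslope := hf.le_slope_of_hasDerivAt hy hx hyx hf'
    rw [slope_def_field, le_div_iff₀ (sub_pos.2 hyx)] at hslope
    linarith

lemma ConvexOn.le_add_mul_sub_of_mem_Icc {S : Set ℝ} {f : ℝ → ℝ} {a b m t : ℝ}
    (hf : ConvexOn ℝ S f) (ha : a ∈ S) (hb : b ∈ S) (hfb : f b ≤ f a + m * (b - a))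
    (ht : t ∈ Icc a b) : f t ≤ f a + m * (t - a) := by
  obtain ⟨hat, htb⟩ := ht
  rcases hat.eq_or_lt with rfl | hat
  · simp
  have hab : a < b := hat.trans_le htb
  have hslope : (f t - f a) / (t - a) ≤ (f b - f a) / (b - a) :=
    hf.secant_mono ha (hf.1.ordConnected.out ha hb ⟨hat.le, htb⟩) hb hat.ne' hab.ne' htb
  have hchord : (f b - f a) / (b - a) ≤ m := by
    rw [div_le_iff₀ (sub_pos.2 hab)]
    linarith
  have hslope_le := hslope.trans hchord
  rw [div_le_iff₀ (sub_pos.2 hat)] at hslope_le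
  linarith

namespace Real

lemma sigmoid_mul_one_sub_eq_sub_sq (x : ℝ) :
    sigmoid x * (1 - sigmoid x) = 4⁻¹ - (sigmoid x - 2⁻¹) ^ 2 := by
  ring

lemma monotoneOn_deriv_sigmoid : MonotoneOn (deriv sigmoid) (Iic 0) := by
  intro a _ b hb hab
  have hb_le_half : sigmoid b ≤ 2⁻¹ := sigmoid_zero ▸ sigmoid_le hb
  simp only [deriv_sigmoid, sigmoid_mul_one_sub_eq_sub_sq]
  nlinarith [sigmoid_le hab]

lemma antitoneOn_deriv_sigmoid : AntitoneOn (deriv sigmoid) (Ici 0) := by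
  intro a ha b _ hab
  have ha_ge_half : 2⁻¹ ≤ sigmoid a := sigmoid_zero ▸ sigmoid_le ha
  simp only [deriv_sigmoid, sigmoid_mul_one_sub_eq_sub_sq]
  nlinarith [sigmoid_le hab]

lemma convexOn_sigmoid_Iic : ConvexOn ℝ (Iic 0) sigmoid :=
  (monotoneOn_deriv_sigmoid.mono interior_subset).convexOn_of_deriv (convex_Iic 0)
    continuous_sigmoid.continuousOn differentiable_sigmoid.differentiableOn

lemma concaveOn_sigmoid_Ici : ConcaveOn ℝ (Ici 0) sigmoid :=
  (antitoneOn_deriv_sigmoid.mono interior_subset).concaveOn_of_deriv (convex_Ici 0)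
    continuous_sigmoid.continuousOn differentiable_sigmoid.differentiableOn

end Real

lemma sigmoid_eq_real_sigmoid : sigmoid = Real.sigmoid := by
  funext y
  rw [sigmoid, Real.sigmoid_def, one_div]

theorem sigmoid_crown_upper_unstable_general (l u d : ℝ) (hl : l < 0)
    (hd : d ∈ Set.Icc 0 u)
    (htangent : sigmoid d - sigmoid l = sigmoid d * (1 - sigmoid d) * (d - l)) :
    ∀ y ∈ Set.Icc l u,
      sigmoid y ≤ sigmoid l + sigmoid d * (1 - sigmoid d) * (y - l) := by
  rw [sigmoid_eq_real_sigmoid] at htangent ⊢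
  have h_nonneg : ∀ t ∈ Ici (0 : ℝ),
      Real.sigmoid t ≤ Real.sigmoid l + Real.sigmoid d * (1 - Real.sigmoid d) * (t - l) := by
    intro t ht
    have htangent_line :=
      Real.concaveOn_sigmoid_Ici.le_tangent_of_hasDerivAt hd.1 ht (Real.hasDerivAt_sigmoid d)
    linarith
  rintro y ⟨hly, -⟩
  rcases le_or_gt 0 y with hy | hy
  · exact h_nonneg y hy
  · exact Real.convexOn_sigmoid_Iic.le_add_mul_sub_of_mem_Icc hl.le self_mem_Iic
      (h_nonneg 0 self_mem_Ici) ⟨hly, hy.le⟩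

/-- CROWN linear upper bound for an unstable sigmoid neuron (`l < 0 < u`): the line through the
left endpoint `(l, σ l)` with slope `σ' d = σ d * (1 - σ d)`, where `d ∈ [0, u]` is the tangency
point, is an upper bound for `σ` on `[l, u]`. -/
theorem sigmoid_crown_upper_unstable (l u d : ℝ) (hl : l < 0) (hu : 0 < u)
    (hd : d ∈ Set.Icc 0 u)
    (htangent : sigmoid d - sigmoid l = sigmoid d * (1 - sigmoid d) * (d - l)) :
    ∀ y ∈ Set.Icc l u,
      sigmoid y ≤ sigmoid l + sigmoid d * (1 - sigmoid d) * (y - l) :=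
  sigmoid_crown_upper_unstable_general l u d hl hd htangent
end
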